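/- Let N ≥ 1, M > 0, x, y ∈ ℝ^N with all components in [0, M], let 0 < δ < M, let F : K_x → K_y satisfy |d²(p,q) − d²(F(p), F(q))| ≤ 2δ for all p, q ∈ K_x, and let τ : {1,…,N} → {1,…,N} satisfy F(p_n^+(x)), F(p_n^−(x)) ∈ {p_{τ(n)}^+(y), p_{τ(n)}^−(y)} for all n. Then τ is injective (hence bijective). -/
import Mathlib


noncomputable def box (M : ℝ) (n : ℕ) : Set (ℝ × ℝ) :=
  Set.Icc (4 * M + 10 * M * (n : ℝ)) (4 * M + 10 * M * (n : ℝ) + 2 * M) ×ˢ Set.Icc (-M) M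

noncomputable def pp {N : ℕ} (M : ℝ) (z : Fin N → ℝ) (n : Fin N) : ℝ × ℝ :=
  (10 * M * ((n : ℕ) : ℝ), z n)

noncomputable def pm {N : ℕ} (M : ℝ) (z : Fin N → ℝ) (n : Fin N) : ℝ × ℝ :=
  (10 * M * ((n : ℕ) : ℝ), -(z n))

noncomputable def Kset {N : ℕ} (M : ℝ) (z : Fin N → ℝ) : Set (ℝ × ℝ) :=
  ⋃ n : Fin N, ({pp M z n, pm M z n} ∪ box M n)

theorem pp_mem {N : ℕ} (M : ℝ) (z : Fin N → ℝ) (n : Fin N) : pp M z n ∈ Kset M z :=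
  Set.mem_iUnion.mpr ⟨n, Or.inl (Set.mem_insert _ _)⟩

theorem pm_mem {N : ℕ} (M : ℝ) (z : Fin N → ℝ) (n : Fin N) : pm M z n ∈ Kset M z :=
  Set.mem_iUnion.mpr ⟨n, Or.inl (Set.mem_insert_of_mem _ rfl)⟩

theorem Kset_compact {N : ℕ} (M : ℝ) (z : Fin N → ℝ) : IsCompact (Kset M z) := by
  apply isCompact_iUnion
  intro n
  exact ((Set.toFinite _).isCompact).union (isCompact_Icc.prod isCompact_Icc)

instance {N : ℕ} (M : ℝ) (z : Fin N → ℝ) : CompactSpace ↥(Kset M z) :=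
  isCompact_iff_compactSpace.mp (Kset_compact M z)

theorem Kset_nonempty {N : ℕ} (hN : 0 < N) (M : ℝ) (z : Fin N → ℝ) : (Kset M z).Nonempty :=
  ⟨pp M z ⟨0, hN⟩, pp_mem M z ⟨0, hN⟩⟩

/-- Step 4: the marked-point index map τ is injective (hence bijective). -/
theorem step4_tau_injective {N : ℕ} (hN : 0 < N) {M : ℝ} (hM : 0 < M)
    (x y : Fin N → ℝ) (hx : ∀ n, x n ∈ Set.Icc (0 : ℝ) M) (hy : ∀ n, y n ∈ Set.Icc (0 : ℝ) M)
    {δ : ℝ} (hδ0 : 0 < δ) (hδM : δ < M)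
    (F : ↥(Kset M x) → ↥(Kset M y))
    (hF : ∀ p q : ↥(Kset M x), |dist p q - dist (F p) (F q)| ≤ 2 * δ)
    (τ : Fin N → Fin N)
    (hτ : ∀ n : Fin N,
      (F ⟨pp M x n, pp_mem M x n⟩ : ℝ × ℝ) ∈ ({pp M y (τ n), pm M y (τ n)} : Set (ℝ × ℝ)) ∧
      (F ⟨pm M x n, pm_mem M x n⟩ : ℝ × ℝ) ∈ ({pp M y (τ n), pm M y (τ n)} : Set (ℝ × ℝ))) :
    Function.Injective τ := by
  intro m n hmn
  by_contra hne
  -- distance between the two marked points in the source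
  have hdist1 : (10:ℝ) * M ≤ dist (pp M x m) (pp M x n) := by
    rw [Prod.dist_eq]
    refine le_max_of_le_left ?_
    simp only [pp, Real.dist_eq]
    have : |(10:ℝ) * M * (m : ℕ) - 10 * M * (n : ℕ)| = 10 * M * |((m:ℕ):ℝ) - ((n:ℕ):ℝ)| := by
      rw [← mul_sub, abs_mul]
      congr 1
      rw [abs_of_nonneg]; positivity
    rw [this]
    have h1 : (1:ℝ) ≤ |((m:ℕ):ℝ) - ((n:ℕ):ℝ)| := by
      have : (m:ℕ) ≠ (n:ℕ) := fun h => hne (Fin.ext h)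
      rcases lt_or_gt_of_ne this with h | h
      · rw [abs_sub_comm, abs_of_nonneg (sub_nonneg.mpr (Nat.cast_le.mpr h.le))]
        have : ((m:ℕ):ℝ) + 1 ≤ ((n:ℕ):ℝ) := by exact_mod_cast h
        linarith
      · rw [abs_of_nonneg (sub_nonneg.mpr (Nat.cast_le.mpr h.le))]
        have : ((n:ℕ):ℝ) + 1 ≤ ((m:ℕ):ℝ) := by exact_mod_cast h
        linarith
    nlinarith
  -- distance between any two points of {pp y k, pm y k} is ≤ 2M
  have hsmall : ∀ a b : ℝ × ℝ, a ∈ ({pp M y (τ m), pm M y (τ m)} : Set (ℝ × ℝ)) →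
      b ∈ ({pp M y (τ m), pm M y (τ m)} : Set (ℝ × ℝ)) → dist a b ≤ 2 * M := by
    have hk := hy (τ m)
    have hd : dist (pp M y (τ m)) (pm M y (τ m)) ≤ 2 * M := by
      rw [Prod.dist_eq]
      apply max_le
      · simp [pp, pm, Real.dist_eq]; positivity
      · simp only [pp, pm, Real.dist_eq]
        rw [abs_of_nonneg (by linarith [hk.1])]
        linarith [hk.2]
    intro a b ha hb
    rcases ha with rfl | ha <;> rcases hb with rfl | hb
    · simp; positivity
    · rw [Set.mem_singleton_iff] at hb; subst hb; exact hd
    · rw [Set.mem_singleton_iff] at ha; subst ha; rw [dist_comm]; exact hd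
    · rw [Set.mem_singleton_iff] at ha hb; subst ha; subst hb; simp; positivity
  have h2 := hF ⟨pp M x m, pp_mem M x m⟩ ⟨pp M x n, pp_mem M x n⟩
  have hFm := (hτ m).1
  have hFn := (hτ n).1
  rw [← hmn] at hFn
  have hFd : dist (F ⟨pp M x m, pp_mem M x m⟩) (F ⟨pp M x n, pp_mem M x n⟩) ≤ 2 * M := by
    rw [Subtype.dist_eq]
    exact hsmall _ _ hFm hFn
  have hsub : dist (⟨pp M x m, pp_mem M x m⟩ : ↥(Kset M x)) ⟨pp M x n, pp_mem M x n⟩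
      = dist (pp M x m) (pp M x n) := Subtype.dist_eq _ _
  rw [hsub] at h2
  have := abs_le.mp h2
  linarith [this.1, this.2]
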